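/- (Bianchi identity, second part) For any connection φ for a sub vector bundle F of TM, with curvature R and cocurvature R̄, one has [R, φ] = i(R)R̄ + i(R̄)R, where [·,·] is the Frölicher–Nijenhuis bracket and i denotes the insertion operator of one tangent-bundle-valued form into another. -/

import Mathlib

/-!
Graded derivations of the algebra of differential forms associated with a connection
(P. Michor).  We model vector fields on a smooth manifold `M` as derivations of the
commutative `ℝ`-algebra `A = C^∞(M, ℝ)` (realized inside `Module.End ℝ A`), and
differential forms (scalar valued, resp. tangent-bundle valued) as functions on lists of
vector fields which are alternating `A`-multilinear of a fixed degree.  All the operators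
of the Frölicher-Nijenhuis calculus are defined by their classical global formulas.
-/

noncomputable section

open scoped Manifold

variable (A : Type*) [CommRing A] [Algebra ℝ A]

/-- The carrier in which vector fields live: `ℝ`-linear endomorphisms of the functions. -/
abbrev Vec := Module.End ℝ A

/-- A vector field is a derivation of the algebra of (smooth) functions. -/
def IsVectorField (X : Vec A) : Prop := ∀ f g : A, X (f * g) = f * X g + g * X f

/-- Raw scalar differential forms: functions on lists of vector fields. -/
abbrev SF := List (Vec A) → A

/-- Raw tangent-bundle valued differential forms. -/
abbrev VF := List (Vec A) → Vec A

/-- All members of the list are genuine vector fields. -/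
def VFList (ℓ : List (Vec A)) : Prop := ∀ X ∈ ℓ, IsVectorField A X

/-- `ω` is a (scalar valued) differential `p`-form: it is supported on lists of length
`p`, it is `A`-multilinear and alternating (on vector fields). -/
structure IsSForm (p : ℕ) (ω : SF A) : Prop where
  support : ∀ ℓ, ℓ.length ≠ p → ω ℓ = 0
  map_add : ∀ l₁ (X Y : Vec A) l₂, VFList A l₁ → VFList A l₂ →
    IsVectorField A X → IsVectorField A Y →
    ω (l₁ ++ (X + Y) :: l₂) = ω (l₁ ++ X :: l₂) + ω (l₁ ++ Y :: l₂)
  map_smul : ∀ l₁ (f : A) (X : Vec A) l₂, VFList A l₁ → VFList A l₂ →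
    IsVectorField A X → ω (l₁ ++ (f • X) :: l₂) = f * ω (l₁ ++ X :: l₂)
  alternate : ∀ l₁ (X : Vec A) l₂ l₃, VFList A l₁ → VFList A l₂ → VFList A l₃ →
    IsVectorField A X → ω (l₁ ++ X :: l₂ ++ X :: l₃) = 0

/-- `K` is a tangent-bundle valued differential `p`-form, `K ∈ Ω^p(M; TM)`. -/
structure IsVForm (p : ℕ) (K : VF A) : Prop where
  support : ∀ ℓ, ℓ.length ≠ p → K ℓ = 0
  map_add : ∀ l₁ (X Y : Vec A) l₂, VFList A l₁ → VFList A l₂ →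
    IsVectorField A X → IsVectorField A Y →
    K (l₁ ++ (X + Y) :: l₂) = K (l₁ ++ X :: l₂) + K (l₁ ++ Y :: l₂)
  map_smul : ∀ l₁ (f : A) (X : Vec A) l₂, VFList A l₁ → VFList A l₂ →
    IsVectorField A X → K (l₁ ++ (f • X) :: l₂) = f • K (l₁ ++ X :: l₂)
  alternate : ∀ l₁ (X : Vec A) l₂ l₃, VFList A l₁ → VFList A l₂ → VFList A l₃ →
    IsVectorField A X → K (l₁ ++ X :: l₂ ++ X :: l₃) = 0
  vec : ∀ ℓ, VFList A ℓ → IsVectorField A (K ℓ)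

/-- A connection for a sub vector bundle `F ⊆ TM`:  a fiber linear projection
`φ : TM → F`, i.e. an idempotent `A`-linear operator on vector fields (whose image is the
space of sections of `F`). -/
structure IsConnection (φ : Vec A → Vec A) : Prop where
  vf : ∀ X, IsVectorField A X → IsVectorField A (φ X)
  idem : ∀ X, IsVectorField A X → φ (φ X) = φ X
  map_add : ∀ X Y, IsVectorField A X → IsVectorField A Y → φ (X + Y) = φ X + φ Y
  map_smul : ∀ (f : A) (X : Vec A), IsVectorField A X → φ (f • X) = f • φ X

/-- The horizontal projection `h = Id - φ` of a connection `φ`. -/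
def hpr (φ : Vec A → Vec A) : Vec A → Vec A := fun X => X - φ X

/-- A bundle endomorphism of `TM` (e.g. `φ` or `h`) viewed as a `1`-form in `Ω¹(M;TM)`. -/
def oneF (φ : Vec A → Vec A) : VF A := fun ℓ => match ℓ with
  | [X] => φ X
  | _ => 0

/-- The curvature `R ∈ Ω²(M;TM)` of the connection, `R(X,Y) = φ [hX, hY]`. -/
def curv (φ : Vec A → Vec A) : VF A := fun ℓ => match ℓ with
  | [X, Y] => φ ⁅hpr A φ X, hpr A φ Y⁆
  | _ => 0

/-- The cocurvature `R̄ ∈ Ω²(M;TM)` of the connection, `R̄(X,Y) = h [φX, φY]`. -/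
def cocurv (φ : Vec A → Vec A) : VF A := fun ℓ => match ℓ with
  | [X, Y] => hpr A φ ⁅φ X, φ Y⁆
  | _ => 0

/-- `h* : Ω(M) → Ω(M)`, `(h*ω)(X₁,…,X_p) = ω(hX₁,…,hX_p)`. -/
def hstar (φ : Vec A → Vec A) : SF A →ₗ[ℝ] SF A :=
  LinearMap.pi fun ℓ => LinearMap.proj (ℓ.map (hpr A φ))

/-- The exterior derivative, by the global (Koszul) formula. -/
def extd : SF A →ₗ[ℝ] SF A :=
  LinearMap.pi fun ℓ =>
    (∑ i : Fin ℓ.length, ((-1 : ℝ) ^ (i : ℕ)) •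
      ((ℓ.get i) ∘ₗ (LinearMap.proj (ℓ.eraseIdx (i : ℕ)) : SF A →ₗ[ℝ] A)))
    + ∑ i : Fin ℓ.length,
        ∑ j ∈ Finset.univ.filter (fun j : Fin ℓ.length => (i : ℕ) < (j : ℕ)),
          ((-1 : ℝ) ^ ((i : ℕ) + (j : ℕ))) •
            (LinearMap.proj ((⁅ℓ.get i, ℓ.get j⁆ : Vec A) ::
              ((ℓ.eraseIdx (j : ℕ)).eraseIdx (i : ℕ))) : SF A →ₗ[ℝ] A)

/-- The insertion operator `i(K) : Ω^p(M) → Ω^{p+k-1}(M)` of `K ∈ Ω^k(M;TM)`: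
`(i(K)ω)(X₁,…,X_n) = 1/(k! (n-k)!) ∑_σ ε(σ) ω(K(X_{σ1},…,X_{σk}), X_{σ(k+1)},…)`. -/
def insS (k : ℕ) (K : VF A) : SF A →ₗ[ℝ] SF A :=
  LinearMap.pi fun ℓ =>
    if hk : k ≤ ℓ.length then
      (((k.factorial * (ℓ.length - k).factorial : ℕ) : ℝ))⁻¹ •
        ∑ σ : Equiv.Perm (Fin ℓ.length),
          (((Equiv.Perm.sign σ : ℤ) : ℝ)) •
            (LinearMap.proj
              ((K (List.ofFn fun m : Fin k => ℓ.get (σ (Fin.castLE hk m)))) ::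
                List.ofFn fun m : Fin (ℓ.length - k) =>
                  ℓ.get (σ ⟨k + (m : ℕ), by have := m.isLt; omega⟩)) : SF A →ₗ[ℝ] A)
    else 0

/-- The insertion operator over `h*`:  `i^h(K)` of `K ∈ Ω^k(M;TM)`, given by
`(i^h(K)ω)(X₁,…,X_n) = 1/(k! (n-k)!) ∑_σ ε(σ) ω(K(X_{σ1},…,X_{σk}), hX_{σ(k+1)},…)`. -/
def insH (φ : Vec A → Vec A) (k : ℕ) (K : VF A) : SF A →ₗ[ℝ] SF A :=
  LinearMap.pi fun ℓ =>
    if hk : k ≤ ℓ.length then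
      (((k.factorial * (ℓ.length - k).factorial : ℕ) : ℝ))⁻¹ •
        ∑ σ : Equiv.Perm (Fin ℓ.length),
          (((Equiv.Perm.sign σ : ℤ) : ℝ)) •
            (LinearMap.proj
              ((K (List.ofFn fun m : Fin k => ℓ.get (σ (Fin.castLE hk m)))) ::
                List.ofFn fun m : Fin (ℓ.length - k) =>
                  hpr A φ (ℓ.get (σ ⟨k + (m : ℕ), by have := m.isLt; omega⟩))) : SF A →ₗ[ℝ] A)
    else 0

/-- Insertion `i(K)T` of `K ∈ Ω^k(M;TM)` into a vector valued form `T`. -/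
def insVV (k : ℕ) (K : VF A) (T : VF A) : VF A := fun ℓ =>
  if hk : k ≤ ℓ.length then
    (((k.factorial * (ℓ.length - k).factorial : ℕ) : ℝ))⁻¹ •
      ∑ σ : Equiv.Perm (Fin ℓ.length),
        (((Equiv.Perm.sign σ : ℤ) : ℝ)) •
          T ((K (List.ofFn fun m : Fin k => ℓ.get (σ (Fin.castLE hk m)))) ::
              List.ofFn fun m : Fin (ℓ.length - k) =>
                ℓ.get (σ ⟨k + (m : ℕ), by have := m.isLt; omega⟩))
  else 0

/-- Insertion over `h*`, `i^h(K)T`, of `K ∈ Ω^k(M;TM)` into a vector valued form `T`. -/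
def insHVV (φ : Vec A → Vec A) (k : ℕ) (K : VF A) (T : VF A) : VF A := fun ℓ =>
  if hk : k ≤ ℓ.length then
    (((k.factorial * (ℓ.length - k).factorial : ℕ) : ℝ))⁻¹ •
      ∑ σ : Equiv.Perm (Fin ℓ.length),
        (((Equiv.Perm.sign σ : ℤ) : ℝ)) •
          T ((K (List.ofFn fun m : Fin k => ℓ.get (σ (Fin.castLE hk m)))) ::
              List.ofFn fun m : Fin (ℓ.length - k) =>
                hpr A φ (ℓ.get (σ ⟨k + (m : ℕ), by have := m.isLt; omega⟩)))
  else 0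

/-- The Lie derivative `Θ(K) = [i(K), d]` along `K ∈ Ω^k(M;TM)`. -/
def theta (k : ℕ) (K : VF A) : SF A →ₗ[ℝ] SF A :=
  insS A k K ∘ₗ extd A - ((-1 : ℝ) ^ (k + 1)) • (extd A ∘ₗ insS A k K)

/-- `Θ^h(K) = h* ∘ Θ(K) ∘ h*`. -/
def thetaH (φ : Vec A → Vec A) (k : ℕ) (K : VF A) : SF A →ₗ[ℝ] SF A :=
  hstar A φ ∘ₗ theta A k K ∘ₗ hstar A φ

/-- A function, viewed as a `0`-form. -/
def constF : A →ₗ[ℝ] SF A where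
  toFun f := fun ℓ => match ℓ with
    | [] => f
    | _ => 0
  map_add' f g := by funext ℓ; cases ℓ <;> simp
  map_smul' r f := by funext ℓ; cases ℓ <;> simp

/-- The Frölicher-Nijenhuis bracket `[K, L] ∈ Ω^{k+l}(M;TM)` of `K ∈ Ω^k(M;TM)` and
`L ∈ Ω^l(M;TM)`, characterized by `Θ([K,L]) = [Θ(K), Θ(L)]` via
`[K,L](X₁,…,X_{k+l}) f = ([Θ(K),Θ(L)] f)(X₁,…,X_{k+l})`. -/
def fnb (k l : ℕ) (K L : VF A) : VF A := fun ℓ =>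
  LinearMap.proj ℓ ∘ₗ
    (theta A k K ∘ₗ theta A l L - ((-1 : ℝ) ^ (k * l)) • (theta A l L ∘ₗ theta A k K)) ∘ₗ
      constF A

/-- Wedge product of a scalar `p`-form with a scalar form. -/
def wedgeSS (p : ℕ) (ω ψ : SF A) : SF A := fun ℓ =>
  if hp : p ≤ ℓ.length then
    (((p.factorial * (ℓ.length - p).factorial : ℕ) : ℝ))⁻¹ •
      ∑ σ : Equiv.Perm (Fin ℓ.length),
        (((Equiv.Perm.sign σ : ℤ) : ℝ)) •
          (ω (List.ofFn fun m : Fin p => ℓ.get (σ (Fin.castLE hp m))) *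
            ψ (List.ofFn fun m : Fin (ℓ.length - p) =>
                ℓ.get (σ ⟨p + (m : ℕ), by have := m.isLt; omega⟩)))
  else 0

/-- Wedge product of a scalar `p`-form with a vector valued form. -/
def wedgeSV (p : ℕ) (ω : SF A) (K : VF A) : VF A := fun ℓ =>
  if hp : p ≤ ℓ.length then
    (((p.factorial * (ℓ.length - p).factorial : ℕ) : ℝ))⁻¹ •
      ∑ σ : Equiv.Perm (Fin ℓ.length),
        (((Equiv.Perm.sign σ : ℤ) : ℝ)) •
          (ω (List.ofFn fun m : Fin p => ℓ.get (σ (Fin.castLE hp m))) •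
            K (List.ofFn fun m : Fin (ℓ.length - p) =>
                ℓ.get (σ ⟨p + (m : ℕ), by have := m.isLt; omega⟩)))
  else 0

/-- `K ∘ Λh`: precompose each argument of a vector valued form with `h`. -/
def precH (φ : Vec A → Vec A) (K : VF A) : VF A := fun ℓ => K (ℓ.map (hpr A φ))

/-- `h ∘ K`: postcompose the values of a vector valued form with `h`. -/
def postH (φ : Vec A → Vec A) (K : VF A) : VF A := fun ℓ => hpr A φ (K ℓ)

/-- `φ ∘ K`: postcompose the values of a vector valued form with `φ`. -/
def postP (φ : Vec A → Vec A) (K : VF A) : VF A := fun ℓ => φ (K ℓ)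

/-- Equality of vector valued forms (tested on vector fields). -/
def VEq (K L : VF A) : Prop := ∀ ℓ, VFList A ℓ → K ℓ = L ℓ

/-- Equality of operators on `Ω(M)` (tested on genuine forms and vector fields). -/
def OpEq (D₁ D₂ : SF A →ₗ[ℝ] SF A) : Prop :=
  ∀ (p : ℕ) (ω : SF A), IsSForm A p ω → ∀ ℓ, VFList A ℓ → D₁ ω ℓ = D₂ ω ℓ

/-- A scalar form is horizontal: it is killed by insertion of any vertical vector. -/
def HorS (φ : Vec A → Vec A) (ω : SF A) : Prop :=
  ∀ l₁ (Y : Vec A) l₂, IsVectorField A Y → ω (l₁ ++ φ Y :: l₂) = 0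

/-- A vector valued form is horizontal: it is killed by any vertical argument. -/
def HorV (φ : Vec A → Vec A) (K : VF A) : Prop :=
  ∀ l₁ (Y : Vec A) l₂, IsVectorField A Y → K (l₁ ++ φ Y :: l₂) = 0

/-- `K ∈ Ω^k(M;TM)^h`, i.e. `h ∘ K = K ∘ Λ^k h`. -/
def EquivH (φ : Vec A → Vec A) (K : VF A) : Prop :=
  ∀ ℓ, VFList A ℓ → hpr A φ (K ℓ) = K (ℓ.map (hpr A φ))

/-- `D` is a graded derivation of `Ω(M)` over `h*` of degree `k`:
`D(ω ∧ ψ) = Dω ∧ h*ψ + (-1)^{k·|ω|} h*ω ∧ Dψ`. -/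
structure IsDerOverH (φ : Vec A → Vec A) (k : ℕ) (D : SF A →ₗ[ℝ] SF A) : Prop where
  degree : ∀ p ω, IsSForm A p ω → IsSForm A (p + k) (D ω)
  leibniz : ∀ (p q : ℕ) (ω ψ : SF A), IsSForm A p ω → IsSForm A q ψ →
    D (wedgeSS A p ω ψ) = wedgeSS A (p + k) (D ω) (hstar A φ ψ)
      + ((-1 : ℝ) ^ (k * p)) • wedgeSS A p (hstar A φ ω) (D ψ)

/-- `D` commutes with `h*` (i.e. `[D, h*] = 0` on `Ω(M)`). -/
def CommutesWithHstar (φ : Vec A → Vec A) (D : SF A →ₗ[ℝ] SF A) : Prop :=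
  ∀ (p : ℕ) (ω : SF A), IsSForm A p ω → ∀ ℓ, VFList A ℓ →
    D (hstar A φ ω) ℓ = hstar A φ (D ω) ℓ

/-- `D` is algebraic: it vanishes on `Ω⁰(M)`. -/
def AlgebraicDer (D : SF A →ₗ[ℝ] SF A) : Prop := ∀ ω : SF A, IsSForm A 0 ω → D ω = 0

/-- The bracket `[K,L]^{∧,h} = i^h(K)L - (-1)^{kl} i^h(L)K` on `Ω^{*+1}(M;TM)^h`,
for `K ∈ Ω^{k+1}(M;TM)^h` and `L ∈ Ω^{l+1}(M;TM)^h`. -/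
def hookBr (φ : Vec A → Vec A) (k l : ℕ) (K L : VF A) : VF A :=
  insHVV A φ (k + 1) K L - ((-1 : ℝ) ^ (k * l)) • insHVV A φ (l + 1) L K

/-- The classical covariant derivative `D^h = h* ∘ d`. -/
def covD (φ : Vec A → Vec A) : SF A →ₗ[ℝ] SF A := hstar A φ ∘ₗ extd A

/-- The covariant derivative `d^h = h* ∘ d ∘ h*`. -/
def covd (φ : Vec A → Vec A) : SF A →ₗ[ℝ] SF A := hstar A φ ∘ₗ extd A ∘ₗ hstar A φ

end

/-- The commutative `ℝ`-algebra of smooth real valued functions on a manifold `M`. -/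
abbrev SmoothFns {EM : Type*} [NormedAddCommGroup EM] [NormedSpace ℝ EM]
    {HM : Type*} [TopologicalSpace HM] (IM : ModelWithCorners ℝ EM HM)
    (M : Type*) [TopologicalSpace M] [ChartedSpace HM M] : Type _ :=
  ContMDiffMap IM (modelWithCornersSelf ℝ ℝ) M ℝ (⊤ : ℕ∞)


/-!
Evaluate on vector fields `X, Y, Z` and a function `f`. By definition
`[R, φ] f = Θ(R) Θ(φ) f - Θ(φ) Θ(R) f` with `Θ(K) f = i(K) df`. On vector fields
`i(R) i(φ) df = i(R) df` (because `φ R = R`) and `i(φ) i(R) df = 0` (because `R(φ ·, ·) = 0`),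
so the first-order terms cancel and `[R, φ](X, Y, Z)` is the alternating sum over the
`(2,1)`-shuffles of `[R(X,Y), φZ] - φ[R(X,Y), Z] - R([X,Y] - [φX,Y] - [X,φY], Z)`.
Splitting each argument into its vertical part `φX` and horizontal part `hX`, this term equals
`h[R(X,Y), φZ] + φ[R̄(X,Y), hZ] - φ[[hX,hY],hZ]`, and the shuffle sum of the last summand
vanishes by the Jacobi identity. That computation only uses that `φ` is an additive idempotent
on a Lie ring, here the Lie algebra of vector fields.
-/

open Equiv

lemma Equiv.Perm.sum_fin_two {M : Type*} [AddCommMonoid M] (g : Perm (Fin 2) → M) :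
    ∑ σ, g σ = g 1 + g (swap 0 1) := by
  rw [show (Finset.univ : Finset (Perm (Fin 2))) = {1, swap 0 1} by decide,
    Finset.sum_pair (by decide)]

lemma Equiv.Perm.sum_fin_three {M : Type*} [AddCommMonoid M] (g : Perm (Fin 3) → M) :
    ∑ σ, g σ = g 1 + g (swap 0 1) + g (swap 0 2) + g (swap 1 2)
      + g (swap 0 1 * swap 1 2) + g (swap 0 2 * swap 1 2) := by
  rw [show (Finset.univ : Finset (Perm (Fin 3))) =
    {1, swap 0 1, swap 0 2, swap 1 2, swap 0 1 * swap 1 2, swap 0 2 * swap 1 2} by decide]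
  repeat rw [Finset.sum_insert (by decide)]
  rw [Finset.sum_singleton]
  abel

def shuffleSum {α β : Type*} [AddCommGroup β] (g : α → α → α → β) (X Y Z : α) : β :=
  g X Y Z - g X Z Y + g Y Z X

lemma shuffleSum_add {α β : Type*} [AddCommGroup β] (g g' : α → α → α → β) (X Y Z : α) :
    shuffleSum g X Y Z + shuffleSum g' X Y Z =
      shuffleSum (fun X Y Z => g X Y Z + g' X Y Z) X Y Z := by
  simp only [shuffleSum]
  abel

section LieRing

variable {L : Type*} [LieRing L]

lemma lie_jacobi_cyclic (x y z : L) : ⁅⁅x, y⁆, z⁆ - ⁅⁅x, z⁆, y⁆ + ⁅⁅y, z⁆, x⁆ = 0 := by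
  rw [lie_lie x y z, ← lie_skew y ⁅x, z⁆, ← lie_skew x ⁅y, z⁆]
  abel

variable (φ : L →+ L)

def curvature (X Y : L) : L := φ ⁅X - φ X, Y - φ Y⁆

def cocurvature (X Y : L) : L := ⁅φ X, φ Y⁆ - φ ⁅φ X, φ Y⁆

variable {φ}

lemma cocurvature_swap (X Y : L) : cocurvature φ Y X = -cocurvature φ X Y := by
  rw [cocurvature, cocurvature, ← lie_skew, map_neg, neg_sub_neg, neg_sub]

lemma curvature_swap (X Y : L) : curvature φ Y X = -curvature φ X Y := by
  rw [curvature, curvature, ← lie_skew, map_neg]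

lemma map_curvature (hφ : ∀ X, φ (φ X) = φ X) (X Y : L) :
    φ (curvature φ X Y) = curvature φ X Y :=
  hφ _

lemma curvature_bianchi_term (hφ : ∀ X, φ (φ X) = φ X) (X Y Z : L) :
    ⁅curvature φ X Y, φ Z⁆ - φ ⁅curvature φ X Y, Z⁆ - curvature φ ⁅X, Y⁆ Z
        + curvature φ ⁅φ X, Y⁆ Z - curvature φ ⁅φ Y, X⁆ Z
      = (⁅curvature φ X Y, φ Z⁆ - φ ⁅curvature φ X Y, φ Z⁆) + φ ⁅cocurvature φ X Y, Z - φ Z⁆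
        - φ ⁅⁅X - φ X, Y - φ Y⁆, Z - φ Z⁆ := by
  obtain ⟨a, x, rfl, ha, hx⟩ : ∃ a x, X = a + x ∧ φ a = a ∧ φ x = 0 :=
    ⟨φ X, X - φ X, by abel, hφ X, by rw [map_sub, hφ, sub_self]⟩
  obtain ⟨b, y, rfl, hb, hy⟩ : ∃ b y, Y = b + y ∧ φ b = b ∧ φ y = 0 :=
    ⟨φ Y, Y - φ Y, by abel, hφ Y, by rw [map_sub, hφ, sub_self]⟩
  obtain ⟨c, z, rfl, hc, hz⟩ : ∃ c z, Z = c + z ∧ φ c = c ∧ φ z = 0 :=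
    ⟨φ Z, Z - φ Z, by abel, hφ Z, by rw [map_sub, hφ, sub_self]⟩
  simp only [curvature, cocurvature, map_add, map_sub, ha, hb, hc, hx, hy, hz, add_zero,
    add_sub_cancel_left, lie_add, add_lie, sub_lie]
  rw [← lie_skew b a, ← lie_skew b x]
  simp only [neg_lie, map_neg]
  abel

lemma curvature_bianchi (hφ : ∀ X, φ (φ X) = φ X) (X Y Z : L) :
    shuffleSum (fun X Y Z => ⁅curvature φ X Y, φ Z⁆ - φ ⁅curvature φ X Y, Z⁆
        - curvature φ ⁅X, Y⁆ Z + curvature φ ⁅φ X, Y⁆ Z - curvature φ ⁅φ Y, X⁆ Z) X Y Z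
      = shuffleSum (fun X Y Z => (⁅curvature φ X Y, φ Z⁆ - φ ⁅curvature φ X Y, φ Z⁆)
        + φ ⁅cocurvature φ X Y, Z - φ Z⁆) X Y Z := by
  have jacobi : φ ⁅⁅X - φ X, Y - φ Y⁆, Z - φ Z⁆ - φ ⁅⁅X - φ X, Z - φ Z⁆, Y - φ Y⁆
      + φ ⁅⁅Y - φ Y, Z - φ Z⁆, X - φ X⁆ = 0 := by
    rw [← map_sub, ← map_add, lie_jacobi_cyclic, map_zero]
  simp only [shuffleSum, curvature_bianchi_term hφ]
  rw [← sub_eq_zero, ← neg_zero, ← jacobi]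
  abel

end LieRing

section Forms

variable {A : Type*} [CommRing A] [Algebra ℝ A]

instance : LieRing (Vec A) := LieRing.ofAssociativeRing

lemma extd_apply_one (ω : SF A) (U : Vec A) : extd A ω [U] = U (ω []) := by
  simp [extd, Finset.sum_filter]

lemma extd_apply_two (ω : SF A) (U V : Vec A) :
    extd A ω [U, V] = U (ω [V]) - V (ω [U]) - ω [⁅U, V⁆] := by
  simp [extd, Fin.sum_univ_succ, Finset.sum_filter]
  abel

lemma extd_apply_three (ω : SF A) (U V W : Vec A) :
    extd A ω [U, V, W] = U (ω [V, W]) - V (ω [U, W]) + W (ω [U, V])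
      - ω [⁅U, V⁆, W] + ω [⁅U, W⁆, V] - ω [⁅V, W⁆, U] := by
  simp [extd, Fin.sum_univ_succ, Finset.sum_filter]
  norm_num
  abel

lemma insS_one_apply_one (K : VF A) (ω : SF A) (U : Vec A) :
    insS A 1 K ω [U] = ω [K [U]] := by
  simp [insS]

lemma insS_one_apply_two (K : VF A) (ω : SF A) (U V : Vec A) :
    insS A 1 K ω [U, V] = ω [K [U], V] - ω [K [V], U] := by
  simp [insS, Perm.sum_fin_two]
  module

lemma insS_two_apply_two (K : VF A) (ω : SF A) (U V : Vec A) :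
    insS A 2 K ω [U, V] = (2 : ℝ)⁻¹ • (ω [K [U, V]] - ω [K [V, U]]) := by
  simp [insS, Perm.sum_fin_two]
  module

lemma insS_one_apply_three (K : VF A) (ω : SF A) (U V W : Vec A) :
    insS A 1 K ω [U, V, W] = (2 : ℝ)⁻¹ •
      (ω [K [U], V, W] - ω [K [U], W, V] - ω [K [V], U, W] + ω [K [V], W, U]
        + ω [K [W], U, V] - ω [K [W], V, U]) := by
  simp [insS, Perm.sum_fin_three, swap_apply_def, Fin.ext_iff]
  module

lemma insS_two_apply_three (K : VF A) (ω : SF A) (U V W : Vec A) :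
    insS A 2 K ω [U, V, W] = (2 : ℝ)⁻¹ •
      (ω [K [U, V], W] - ω [K [U, W], V] - ω [K [V, U], W] + ω [K [V, W], U]
        + ω [K [W, U], V] - ω [K [W, V], U]) := by
  simp [insS, Perm.sum_fin_three, swap_apply_def, Fin.ext_iff]
  module

lemma insVV_two_apply_three (K T : VF A) (U V W : Vec A) :
    insVV A 2 K T [U, V, W] = (2 : ℝ)⁻¹ •
      (T [K [U, V], W] - T [K [U, W], V] - T [K [V, U], W] + T [K [V, W], U]
        + T [K [W, U], V] - T [K [W, V], U]) := by
  simp [insVV, Perm.sum_fin_three, swap_apply_def, Fin.ext_iff]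
  module

variable (A) in
def IsHomogeneous {β : Type*} [Zero β] (p : ℕ) (ω : List (Vec A) → β) : Prop :=
  ∀ ℓ : List (Vec A), ℓ.length ≠ p → ω ℓ = 0

namespace IsHomogeneous

variable {p : ℕ} {ω : SF A}

lemma extd (hω : IsHomogeneous A p ω) : IsHomogeneous A (p + 1) (extd A ω) := by
  intro ℓ hℓ
  simp only [_root_.extd, LinearMap.pi_apply, LinearMap.add_apply, LinearMap.coe_sum,
    Finset.sum_apply, LinearMap.smul_apply, LinearMap.comp_apply, LinearMap.proj_apply]
  rw [Finset.sum_eq_zero, Finset.sum_eq_zero, add_zero]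
  · intro i _
    refine Finset.sum_eq_zero fun j hj => ?_
    have hij := (Finset.mem_filter.mp hj).2
    have hj := j.isLt
    have hlen : ((ℓ.eraseIdx j).eraseIdx i).length = ℓ.length - 2 := by
      rw [List.length_eraseIdx_of_lt (by rw [List.length_eraseIdx_of_lt hj]; omega),
        List.length_eraseIdx_of_lt hj]
      omega
    rw [hω _ (by rw [List.length_cons, hlen]; omega), smul_zero]
  · intro i _
    have hi := i.isLt
    rw [hω _ (by rw [List.length_eraseIdx_of_lt hi]; omega), map_zero, smul_zero]

lemma insS {k : ℕ} {K : VF A} (hω : IsHomogeneous A (p + 1) ω) :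
    IsHomogeneous A (p + k) (insS A k K ω) := by
  intro ℓ hℓ
  simp only [_root_.insS, LinearMap.pi_apply]
  split_ifs with hk
  · simp only [LinearMap.smul_apply, LinearMap.coe_sum, Finset.sum_apply, LinearMap.proj_apply]
    rw [Finset.sum_eq_zero fun σ _ => by rw [hω _ (by simp; omega), smul_zero], smul_zero]
  · rfl

lemma insVV {t k : ℕ} {K T : VF A} (hT : IsHomogeneous A (t + 1) T) :
    IsHomogeneous A (t + k) (insVV A k K T) := by
  intro ℓ hℓ
  rw [_root_.insVV]
  split_ifs with hk
  · rw [Finset.sum_eq_zero fun σ _ => by rw [hT _ (by simp; omega), smul_zero], smul_zero]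
  · rfl

lemma insS_eq_zero {k : ℕ} {K : VF A} (hω : IsHomogeneous A 0 ω) : _root_.insS A k K ω = 0 := by
  funext ℓ
  simp only [_root_.insS, LinearMap.pi_apply]
  split_ifs with hk
  · simp only [LinearMap.smul_apply, LinearMap.coe_sum, Finset.sum_apply, LinearMap.proj_apply]
    rw [Finset.sum_eq_zero fun σ _ => by rw [hω _ (by simp), smul_zero], smul_zero]
    rfl
  · rfl

lemma theta {k : ℕ} {K : VF A} (hω : IsHomogeneous A p ω) :
    IsHomogeneous A (p + k) (theta A k K ω) := by
  intro ℓ hℓ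
  simp only [_root_.theta, LinearMap.sub_apply, LinearMap.comp_apply, LinearMap.smul_apply,
    Pi.sub_apply, Pi.smul_apply]
  cases p with
  | zero => rw [hω.extd.insS ℓ (by omega), hω.insS_eq_zero, map_zero]; simp
  | succ p => rw [hω.extd.insS ℓ (by omega), hω.insS.extd ℓ (by omega)]; simp

end IsHomogeneous

lemma isHomogeneous_constF (f : A) : IsHomogeneous A 0 (constF A f) := by
  rintro (_ | _) h
  · exact absurd rfl h
  · rfl

lemma isHomogeneous_curv (φ : Vec A → Vec A) : IsHomogeneous A 2 (curv A φ) := by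
  rintro (_ | ⟨_, _ | ⟨_, _ | _⟩⟩) h <;> first | rfl | simp at h

lemma isHomogeneous_cocurv (φ : Vec A → Vec A) : IsHomogeneous A 2 (cocurv A φ) := by
  rintro (_ | ⟨_, _ | ⟨_, _ | _⟩⟩) h <;> first | rfl | simp at h

lemma fnb_apply_eq_zero_of_length_ne {k l : ℕ} {K L : VF A} {ℓ : List (Vec A)}
    (hℓ : ℓ.length ≠ k + l) : fnb A k l K L ℓ = 0 := by
  ext f
  simp only [fnb, LinearMap.comp_apply, LinearMap.sub_apply, LinearMap.smul_apply,
    LinearMap.proj_apply, Pi.sub_apply, Pi.smul_apply, LinearMap.zero_apply]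
  rw [(isHomogeneous_constF f).theta.theta ℓ (by omega),
    (isHomogeneous_constF f).theta.theta ℓ (by omega), smul_zero, sub_zero]

variable (A) in
def vectorFields : LieSubalgebra ℝ (Vec A) where
  carrier := {X | IsVectorField A X}
  add_mem' {X Y} hX hY f g := by
    simp only [LinearMap.add_apply, hX f g, hY f g]
    ring
  zero_mem' f g := by simp
  smul_mem' r X hX f g := by
    simp only [LinearMap.smul_apply, hX f g, smul_add, mul_smul_comm]
  lie_mem' {X Y} hX hY f g := by
    simp only [Ring.lie_def, LinearMap.sub_apply, Module.End.mul_apply]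
    rw [hY f g, hX f g, map_add, map_add, hX f (Y g), hX g (Y f), hY f (X g), hY g (X f)]
    ring

lemma IsVectorField.lie {X Y : Vec A} (hX : IsVectorField A X) (hY : IsVectorField A Y) :
    IsVectorField A ⁅X, Y⁆ :=
  (vectorFields A).lie_mem hX hY

namespace IsConnection

variable {φ : Vec A → Vec A}

def restrict (hφ : IsConnection A φ) : ↥(vectorFields A) →+ ↥(vectorFields A) :=
  AddMonoidHom.mk' (fun X => ⟨φ X, hφ.vf X X.property⟩)
    fun X Y => Subtype.ext (hφ.map_add X Y X.property Y.property)

lemma restrict_idem (hφ : IsConnection A φ) (X : vectorFields A) :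
    hφ.restrict (hφ.restrict X) = hφ.restrict X :=
  Subtype.ext (hφ.idem X X.property)

lemma map_zero' (hφ : IsConnection A φ) : φ 0 = 0 :=
  congrArg Subtype.val (map_zero hφ.restrict)

lemma hpr_map (hφ : IsConnection A φ) {X : Vec A} (hX : IsVectorField A X) :
    hpr A φ (φ X) = 0 :=
  sub_eq_zero.mpr (hφ.idem X hX).symm

lemma map_neg' (hφ : IsConnection A φ) {X : Vec A} (hX : IsVectorField A X) : φ (-X) = -φ X :=
  congrArg Subtype.val (map_neg hφ.restrict (⟨X, hX⟩ : vectorFields A))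

lemma map_sub' (hφ : IsConnection A φ) {X Y : Vec A} (hX : IsVectorField A X)
    (hY : IsVectorField A Y) : φ (X - Y) = φ X - φ Y :=
  congrArg Subtype.val (map_sub hφ.restrict (⟨X, hX⟩ : vectorFields A) ⟨Y, hY⟩)

lemma hpr_neg (hφ : IsConnection A φ) {X : Vec A} (hX : IsVectorField A X) :
    hpr A φ (-X) = -hpr A φ X := by
  rw [hpr, hpr, hφ.map_neg' hX, sub_neg_eq_add, neg_sub, neg_add_eq_sub]

lemma hpr_hpr (hφ : IsConnection A φ) {X : Vec A} (hX : IsVectorField A X) :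
    hpr A φ (hpr A φ X) = hpr A φ X := by
  rw [hpr, hpr, hφ.map_sub' hX (hφ.vf X hX), hφ.idem X hX, sub_self, sub_zero]

lemma isVectorField_hpr (hφ : IsConnection A φ) {X : Vec A} (hX : IsVectorField A X) :
    IsVectorField A (hpr A φ X) :=
  ((⟨X, hX⟩ : vectorFields A) - hφ.restrict ⟨X, hX⟩).property

end IsConnection

lemma theta_constF (k : ℕ) (K : VF A) (f : A) :
    theta A k K (constF A f) = insS A k K (extd A (constF A f)) := by
  rw [theta, LinearMap.sub_apply, LinearMap.comp_apply, LinearMap.smul_apply,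
    LinearMap.comp_apply, (isHomogeneous_constF f).insS_eq_zero, map_zero, smul_zero, sub_zero]

lemma theta_apply (k : ℕ) (K : VF A) (ω : SF A) (ℓ : List (Vec A)) :
    theta A k K ω ℓ =
      insS A k K (extd A ω) ℓ - (-1 : ℝ) ^ (k + 1) • extd A (insS A k K ω) ℓ :=
  rfl

section Connection

variable {φ : Vec A → Vec A}

lemma curv_swap (hφ : IsConnection A φ) {U V : Vec A} (hU : IsVectorField A U)
    (hV : IsVectorField A V) : curv A φ [V, U] = -curv A φ [U, V] :=
  congrArg Subtype.val
    (curvature_swap (φ := hφ.restrict) (⟨U, hU⟩ : vectorFields A) ⟨V, hV⟩)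

lemma map_curv (hφ : IsConnection A φ) {U V : Vec A} (hU : IsVectorField A U)
    (hV : IsVectorField A V) : φ (curv A φ [U, V]) = curv A φ [U, V] :=
  congrArg Subtype.val (map_curvature hφ.restrict_idem (⟨U, hU⟩ : vectorFields A) ⟨V, hV⟩)

lemma curv_map_left (hφ : IsConnection A φ) {U : Vec A} (hU : IsVectorField A U) (V : Vec A) :
    curv A φ [φ U, V] = 0 := by
  rw [curv, hφ.hpr_map hU, zero_lie, hφ.map_zero']

lemma curv_map_right (hφ : IsConnection A φ) (U : Vec A) {V : Vec A} (hV : IsVectorField A V) :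
    curv A φ [U, φ V] = 0 := by
  rw [curv, hφ.hpr_map hV, lie_zero, hφ.map_zero']

lemma cocurv_swap (hφ : IsConnection A φ) {U V : Vec A} (hU : IsVectorField A U)
    (hV : IsVectorField A V) : cocurv A φ [V, U] = -cocurv A φ [U, V] :=
  congrArg Subtype.val
    (cocurvature_swap (φ := hφ.restrict) (⟨U, hU⟩ : vectorFields A) ⟨V, hV⟩)

lemma isVectorField_curv (hφ : IsConnection A φ) {U V : Vec A} (hU : IsVectorField A U)
    (hV : IsVectorField A V) : IsVectorField A (curv A φ [U, V]) :=
  (curvature hφ.restrict (⟨U, hU⟩ : vectorFields A) ⟨V, hV⟩).property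

lemma isVectorField_cocurv (hφ : IsConnection A φ) {U V : Vec A} (hU : IsVectorField A U)
    (hV : IsVectorField A V) : IsVectorField A (cocurv A φ [U, V]) :=
  (cocurvature hφ.restrict (⟨U, hU⟩ : vectorFields A) ⟨V, hV⟩).property

lemma hpr_cocurv (hφ : IsConnection A φ) {U V : Vec A} (hU : IsVectorField A U)
    (hV : IsVectorField A V) : hpr A φ (cocurv A φ [U, V]) = cocurv A φ [U, V] :=
  hφ.hpr_hpr ((hφ.vf U hU).lie (hφ.vf V hV))

lemma theta_oneF_constF_apply (f : A) (U : Vec A) :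
    theta A 1 (oneF A φ) (constF A f) [U] = φ U f := by
  rw [theta_constF, insS_one_apply_one, extd_apply_one]
  rfl

lemma theta_curv_constF_apply (hφ : IsConnection A φ) (f : A) {U V : Vec A}
    (hU : IsVectorField A U) (hV : IsVectorField A V) :
    theta A 2 (curv A φ) (constF A f) [U, V] = curv A φ [U, V] f := by
  rw [theta_constF, insS_two_apply_two, extd_apply_one, extd_apply_one, curv_swap hφ hU hV,
    LinearMap.neg_apply, sub_neg_eq_add]
  change (2 : ℝ)⁻¹ • (curv A φ [U, V] f + curv A φ [U, V] f) = _
  module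

lemma insS_curv_theta_oneF_constF_apply (hφ : IsConnection A φ) (f : A) {U V : Vec A}
    (hU : IsVectorField A U) (hV : IsVectorField A V) :
    insS A 2 (curv A φ) (theta A 1 (oneF A φ) (constF A f)) [U, V] = curv A φ [U, V] f := by
  rw [insS_two_apply_two, theta_oneF_constF_apply, theta_oneF_constF_apply, curv_swap hφ hU hV,
    hφ.map_neg' (isVectorField_curv hφ hU hV), map_curv hφ hU hV, LinearMap.neg_apply,
    sub_neg_eq_add]
  module

lemma insS_oneF_theta_curv_constF_apply (hφ : IsConnection A φ) (f : A) {U V : Vec A}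
    (hU : IsVectorField A U) (hV : IsVectorField A V) :
    insS A 1 (oneF A φ) (theta A 2 (curv A φ) (constF A f)) [U, V] = 0 := by
  rw [insS_one_apply_two]
  simp only [oneF]
  rw [theta_curv_constF_apply hφ f (hφ.vf U hU) hV,
    theta_curv_constF_apply hφ f (hφ.vf V hV) hU,
    curv_map_left hφ hU, curv_map_left hφ hV, LinearMap.zero_apply, sub_self]

lemma theta_curv_theta_oneF_constF_apply_three (hφ : IsConnection A φ) (f : A) {X Y Z : Vec A}
    (hX : IsVectorField A X) (hY : IsVectorField A Y) (hZ : IsVectorField A Z) :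
    theta A 2 (curv A φ) (theta A 1 (oneF A φ) (constF A f)) [X, Y, Z] =
      shuffleSum (fun X Y Z => curv A φ [X, Y] (φ Z f) - φ ⁅curv A φ [X, Y], Z⁆ f
        - curv A φ [⁅X, Y⁆, Z] f) X Y Z := by
  rw [theta_apply, insS_two_apply_three, extd_apply_three]
  simp only [extd_apply_two, theta_oneF_constF_apply, curv_swap hφ hX hY, curv_swap hφ hX hZ,
    curv_swap hφ hY hZ]
  simp (config := { maxDischargeDepth := 4 }) only [insS_curv_theta_oneF_constF_apply hφ f,
    neg_lie, LinearMap.neg_apply, map_neg, hφ.map_neg', map_curv hφ, isVectorField_curv hφ,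
    IsVectorField.lie, hX, hY, hZ]
  rw [shuffleSum]
  module

lemma theta_oneF_theta_curv_constF_apply_three (hφ : IsConnection A φ) (f : A) {X Y Z : Vec A}
    (hX : IsVectorField A X) (hY : IsVectorField A Y) (hZ : IsVectorField A Z) :
    theta A 1 (oneF A φ) (theta A 2 (curv A φ) (constF A f)) [X, Y, Z] =
      shuffleSum (fun X Y Z => φ Z (curv A φ [X, Y] f) - curv A φ [⁅φ X, Y⁆, Z] f
        + curv A φ [⁅φ Y, X⁆, Z] f) X Y Z := by
  have hvanish :
      extd A (insS A 1 (oneF A φ) (theta A 2 (curv A φ) (constF A f))) [X, Y, Z] = 0 := by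
    rw [extd_apply_three]
    simp [insS_oneF_theta_curv_constF_apply hφ f, IsVectorField.lie, hX, hY, hZ]
  rw [theta_apply, hvanish, smul_zero, sub_zero, insS_one_apply_three]
  simp only [oneF, extd_apply_three]
  simp (config := { maxDischargeDepth := 4 }) only [theta_curv_constF_apply hφ f,
    curv_map_left hφ, curv_map_right hφ, curv_swap hφ hX hY, curv_swap hφ hX hZ,
    curv_swap hφ hY hZ, LinearMap.zero_apply, LinearMap.neg_apply, map_zero, map_neg,
    hφ.vf, IsVectorField.lie, hX, hY, hZ]
  rw [shuffleSum]
  module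

lemma fnb_curv_oneF_apply_three (hφ : IsConnection A φ) {X Y Z : Vec A}
    (hX : IsVectorField A X) (hY : IsVectorField A Y) (hZ : IsVectorField A Z) :
    fnb A 2 1 (curv A φ) (oneF A φ) [X, Y, Z] =
      shuffleSum (fun X Y Z => ⁅curv A φ [X, Y], φ Z⁆ - φ ⁅curv A φ [X, Y], Z⁆
        - curv A φ [⁅X, Y⁆, Z] + curv A φ [⁅φ X, Y⁆, Z] - curv A φ [⁅φ Y, X⁆, Z])
        X Y Z := by
  ext f
  simp only [fnb, LinearMap.comp_apply, LinearMap.sub_apply, LinearMap.smul_apply,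
    LinearMap.proj_apply, Pi.sub_apply, Pi.smul_apply]
  rw [theta_curv_theta_oneF_constF_apply_three hφ f hX hY hZ,
    theta_oneF_theta_curv_constF_apply_three hφ f hX hY hZ]
  simp only [shuffleSum, LinearMap.sub_apply, LinearMap.add_apply, Ring.lie_def,
    Module.End.mul_apply]
  module

lemma insVV_curv_cocurv_apply_three (hφ : IsConnection A φ) {X Y Z : Vec A}
    (hX : IsVectorField A X) (hY : IsVectorField A Y) (hZ : IsVectorField A Z) :
    insVV A 2 (curv A φ) (cocurv A φ) [X, Y, Z] =
      shuffleSum (fun X Y Z => hpr A φ ⁅curv A φ [X, Y], φ Z⁆) X Y Z := by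
  rw [insVV_two_apply_three, curv_swap hφ hX hY, curv_swap hφ hX hZ, curv_swap hφ hY hZ]
  simp only [cocurv]
  simp (config := { maxDischargeDepth := 4 }) only [hφ.map_neg', map_curv hφ, neg_lie,
    hφ.hpr_neg, isVectorField_curv hφ, IsVectorField.lie, hφ.vf, hX, hY, hZ]
  rw [shuffleSum]
  module

lemma insVV_cocurv_curv_apply_three (hφ : IsConnection A φ) {X Y Z : Vec A}
    (hX : IsVectorField A X) (hY : IsVectorField A Y) (hZ : IsVectorField A Z) :
    insVV A 2 (cocurv A φ) (curv A φ) [X, Y, Z] =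
      shuffleSum (fun X Y Z => φ ⁅cocurv A φ [X, Y], hpr A φ Z⁆) X Y Z := by
  rw [insVV_two_apply_three, cocurv_swap hφ hX hY, cocurv_swap hφ hX hZ, cocurv_swap hφ hY hZ]
  simp only [curv]
  simp (config := { maxDischargeDepth := 4 }) only [hφ.map_neg', hpr_cocurv hφ, neg_lie,
    hφ.hpr_neg, isVectorField_cocurv hφ, IsVectorField.lie, hφ.isVectorField_hpr, hX, hY, hZ]
  rw [shuffleSum]
  module

end Connection

theorem IsConnection.fnb_curv_oneF {φ : Vec A → Vec A} (hφ : IsConnection A φ) :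
    VEq A (fnb A 2 1 (curv A φ) (oneF A φ))
      (insVV A 2 (curv A φ) (cocurv A φ) + insVV A 2 (cocurv A φ) (curv A φ)) := by
  intro ℓ hℓ
  by_cases hlen : ℓ.length = 3
  · obtain ⟨X, Y, Z, rfl⟩ := List.length_eq_three.mp hlen
    have hX : IsVectorField A X := hℓ X (by simp)
    have hY : IsVectorField A Y := hℓ Y (by simp)
    have hZ : IsVectorField A Z := hℓ Z (by simp)
    rw [Pi.add_apply, fnb_curv_oneF_apply_three hφ hX hY hZ,
      insVV_curv_cocurv_apply_three hφ hX hY hZ, insVV_cocurv_curv_apply_three hφ hX hY hZ,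
      shuffleSum_add]
    exact congrArg Subtype.val
      (curvature_bianchi hφ.restrict_idem (⟨X, hX⟩ : vectorFields A) ⟨Y, hY⟩ ⟨Z, hZ⟩)
  · rw [fnb_apply_eq_zero_of_length_ne hlen, Pi.add_apply,
      (isHomogeneous_curv φ).insVV ℓ hlen, (isHomogeneous_cocurv φ).insVV ℓ hlen, add_zero]

end Forms

theorem bianchi_identity_second_part_general
    {EM : Type*} [NormedAddCommGroup EM] [NormedSpace ℝ EM]
    {HM : Type*} [TopologicalSpace HM] {IM : ModelWithCorners ℝ EM HM}
    {M : Type*} [TopologicalSpace M] [ChartedSpace HM M]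
    (φ : Vec (SmoothFns IM M) → Vec (SmoothFns IM M))
    (hφ : IsConnection (SmoothFns IM M) φ) :
    VEq (SmoothFns IM M)
      (fnb (SmoothFns IM M) 2 1 (curv (SmoothFns IM M) φ) (oneF (SmoothFns IM M) φ))
      (insVV (SmoothFns IM M) 2 (curv (SmoothFns IM M) φ) (cocurv (SmoothFns IM M) φ) + insVV (SmoothFns IM M) 2 (cocurv (SmoothFns IM M) φ) (curv (SmoothFns IM M) φ)) :=
  hφ.fnb_curv_oneF

/-- **Bianchi identity, second part** (Lemma 1.4).  For any connection `φ` with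
curvature `R` and cocurvature `R̄`, `[R, φ] = i(R)R̄ + i(R̄)R`, where `[·,·]` is the
Frölicher–Nijenhuis bracket and `i` is the insertion operator. -/
theorem bianchi_identity_second_part
    {EM : Type*} [NormedAddCommGroup EM] [NormedSpace ℝ EM]
    {HM : Type*} [TopologicalSpace HM] {IM : ModelWithCorners ℝ EM HM}
    {M : Type*} [TopologicalSpace M] [ChartedSpace HM M] [IsManifold IM (⊤ : ℕ∞) M]
    (φ : Vec (SmoothFns IM M) → Vec (SmoothFns IM M))
    (hφ : IsConnection (SmoothFns IM M) φ) :
    VEq (SmoothFns IM M)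
      (fnb (SmoothFns IM M) 2 1 (curv (SmoothFns IM M) φ) (oneF (SmoothFns IM M) φ))
      (insVV (SmoothFns IM M) 2 (curv (SmoothFns IM M) φ) (cocurv (SmoothFns IM M) φ) + insVV (SmoothFns IM M) 2 (cocurv (SmoothFns IM M) φ) (curv (SmoothFns IM M) φ)) :=
  bianchi_identity_second_part_general φ hφ
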